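/- Assume θ(i)≠i for all i∈I. Then for each i∈I, every element u of V_θ(λ) can be written uniquely as a finite sum u = Σ_{n≥0} F_i^{(n)} u_n where u_n∈V_θ(λ), E_i u_n = 0 for all n, and u_n = 0 for all but finitely many n. (In particular E_i acts locally nilpotently on V_θ(λ).) -/

import Mathlib

/-!
Because `θ i ≠ i`, the defining relation of `B_θ(g)` for `E_i F_i` reads
`E_i F_i = q^{-(α_i,α_i)} F_i E_i + 1`. For such a pair and `v ∈ ker E_i`, `E_i^n F_i^n v` is a
nonzero multiple of `v` (a product of geometric sums in `q^{-(α_i,α_i)}`, none of which vanishes),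
while `E_i^m F_i^n v = 0` for `m > n`. Applying `E_i^N` to a decomposition whose top index is `N`
therefore isolates its top term: this gives uniqueness, and subtracting top terms one at a time
gives a decomposition of every vector killed by a power of `E_i`. These vectors form a submodule
containing `φ_λ`, stable under `T_j^{±1}` (which `q`-commute with `E_i`), under `F_j` (since
`E_i F_j - q^{-(α_i,α_j)} F_j E_i` is `0`, `1` or `T_i`) and under `E_j`, `j ≠ i` (by the
`q`-Serre relation); as `φ_λ` generates `V_θ(λ)`, `E_i` is locally nilpotent on all of it.
-/

set_option synthInstance.maxHeartbeats 1000000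
set_option maxHeartbeats 1000000

noncomputable section
open scoped BigOperators TensorProduct

abbrev KK : Type := RatFunc ℚ

def qq : KK := RatFunc.X

def qZ (n : ℤ) : KK := qq ^ n

def qInt (d : ℤ) (k : ℕ) : KK := (qq ^ (d * k) - qq ^ (-(d * k : ℤ))) / (qq ^ d - qq ^ (-d : ℤ))

def qFact (d : ℤ) (k : ℕ) : KK := ∏ m ∈ Finset.range k, qInt d (m + 1)

variable {I : Type} [DecidableEq I]

/-- `b = 1 - (α_i^∨, α_j)` -/
def serreN (A : I → I → ℤ) (i j : I) : ℕ := (1 - 2 * A i j / A i i).toNat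

/-- the `q`-Serre element `Σ_k (-1)^k x_i^{(k)} x_j x_i^{(b-k)}` attached to a family
`x : I → R` of elements of a `K`-algebra `R`. -/
def serreElt (A : I → I → ℤ) {R : Type} [Ring R] [Algebra KK R] (x : I → R) (i j : I) : R :=
  ∑ k ∈ Finset.range (serreN A i j + 1),
    ((-1 : KK) ^ k * (qFact (A i i / 2) k)⁻¹ * (qFact (A i i / 2) (serreN A i j - k))⁻¹) •
      (x i ^ k * x j * x i ^ (serreN A i j - k))

inductive SerreRel (A : I → I → ℤ) : FreeAlgebra KK I → FreeAlgebra KK I → Prop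
  | serre (i j : I) (h : i ≠ j) : SerreRel A (serreElt A (FreeAlgebra.ι KK) i j) 0

abbrev Um (A : I → I → ℤ) : Type := RingQuot (SerreRel A)

def fgen (A : I → I → ℤ) (i : I) : Um A := RingQuot.mkAlgHom KK (SerreRel A) (FreeAlgebra.ι KK i)

def fdiv (A : I → I → ℤ) (i : I) (n : ℕ) : Um A :=
  (qFact (A i i / 2) n)⁻¹ • (fgen A i) ^ n

def IsCartan (A : I → I → ℤ) : Prop :=
  (∀ i j, A i j = A j i) ∧ (∀ i, 0 < A i i) ∧ (∀ i, 2 ∣ A i i) ∧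
  (∀ i j, i ≠ j → A i j ≤ 0) ∧ (∀ i j, A i i ∣ 2 * A i j)

/-- `θ` is a Dynkin-diagram involution. -/
def IsTheta (A : I → I → ℤ) (θ : I → I) : Prop :=
  (∀ i, θ (θ i) = i) ∧ (∀ i j, A (θ i) (θ j) = A i j)

/-- generators of `B_θ(g)`: `E_i`, `F_i`, `T_i` and `T_i⁻¹`. -/
inductive BGen (I : Type) : Type
  | E : I → BGen I
  | F : I → BGen I
  | T : I → BGen I
  | Ti : I → BGen I

def bE (i : I) : FreeAlgebra KK (BGen I) := FreeAlgebra.ι KK (BGen.E i)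
def bF (i : I) : FreeAlgebra KK (BGen I) := FreeAlgebra.ι KK (BGen.F i)
def bT (i : I) : FreeAlgebra KK (BGen I) := FreeAlgebra.ι KK (BGen.T i)
def bTi (i : I) : FreeAlgebra KK (BGen I) := FreeAlgebra.ι KK (BGen.Ti i)

/-- the defining relations of `B_θ(g)`. -/
inductive BRel (A : I → I → ℤ) (θ : I → I) :
    FreeAlgebra KK (BGen I) → FreeAlgebra KK (BGen I) → Prop
  | T_inv_right (i : I) : BRel A θ (bT i * bTi i) 1
  | T_inv_left (i : I) : BRel A θ (bTi i * bT i) 1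
  | T_comm (i j : I) : BRel A θ (bT i * bT j) (bT j * bT i)
  | T_theta (i : I) : BRel A θ (bT (θ i)) (bT i)
  | Ti_theta (i : I) : BRel A θ (bTi (θ i)) (bTi i)
  | TE (i j : I) : BRel A θ (bT i * bE j) (qZ (A i j + A (θ i) j) • (bE j * bT i))
  | TF (i j : I) : BRel A θ (bT i * bF j) (qZ (-(A i j + A (θ i) j)) • (bF j * bT i))
  | EF (i j : I) : BRel A θ (bE i * bF j)
      (qZ (-(A i j)) • (bF j * bE i) + (if i = j then 1 else 0) +
        (if θ i = j then bT i else 0))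
  | Eserre (i j : I) (h : i ≠ j) : BRel A θ (serreElt A bE i j) 0
  | Fserre (i j : I) (h : i ≠ j) : BRel A θ (serreElt A bF i j) 0

abbrev Bth (A : I → I → ℤ) (θ : I → I) : Type := RingQuot (BRel A θ)

def Eg (A : I → I → ℤ) (θ : I → I) (i : I) : Bth A θ :=
  RingQuot.mkAlgHom KK (BRel A θ) (bE i)
def Fg (A : I → I → ℤ) (θ : I → I) (i : I) : Bth A θ :=
  RingQuot.mkAlgHom KK (BRel A θ) (bF i)
def Tg (A : I → I → ℤ) (θ : I → I) (i : I) : Bth A θ :=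
  RingQuot.mkAlgHom KK (BRel A θ) (bT i)
def Tig (A : I → I → ℤ) (θ : I → I) (i : I) : Bth A θ :=
  RingQuot.mkAlgHom KK (BRel A θ) (bTi i)

/-- a dominant integral `θ`-invariant weight `λ`, recorded through the pairings
`lam i = (α_i, λ)`. -/
def IsDomWt (A : I → I → ℤ) (θ : I → I) (lam : I → ℤ) : Prop :=
  (∀ i, 0 ≤ lam i) ∧ (∀ i, A i i ∣ 2 * lam i) ∧ (∀ i, lam (θ i) = lam i)

/-- a representation of `B_θ(g)` together with a marked vector. -/
structure BRep (A : I → I → ℤ) (θ : I → I) where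
  carrier : Type
  [ag : AddCommGroup carrier]
  [mo : Module KK carrier]
  rho : Bth A θ →ₐ[KK] Module.End KK carrier
  vac : carrier

attribute [instance] BRep.ag BRep.mo

variable {A : I → I → ℤ} {θ : I → I}

/-- `M` is a highest weight module `V_θ(λ)`:  `E_i φ_λ = 0`, `T_i φ_λ = q^{(α_i,λ)} φ_λ`,
`M` is generated by `φ_λ`, and `{u : E_i u = 0 ∀i} = K φ_λ`. -/
def IsVtheta (A : I → I → ℤ) (θ : I → I) (lam : I → ℤ) (M : BRep A θ) : Prop :=
  (∀ i, M.rho (Eg A θ i) M.vac = 0) ∧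
  (∀ i, M.rho (Tg A θ i) M.vac = qZ (lam i) • M.vac) ∧
  (∀ W : Submodule KK M.carrier,
    (∀ x : Bth A θ, ∀ w ∈ W, M.rho x w ∈ W) → M.vac ∈ W → W = ⊤) ∧
  (∀ u : M.carrier, (∀ i, M.rho (Eg A θ i) u = 0) ↔ ∃ c : KK, u = c • M.vac)

/-- irreducibility of a `B_θ(g)`-module. -/
def IsIrrep (M : BRep A θ) : Prop :=
  (∃ v : M.carrier, v ≠ 0) ∧
  ∀ W : Submodule KK M.carrier,
    (∀ x : Bth A θ, ∀ w ∈ W, M.rho x w ∈ W) → W = ⊥ ∨ W = ⊤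

/-- the divided power `F_i^{(n)}` acting on a representation `M`. -/
def Fpow (lam : I → ℤ) (M : BRep A θ) (i : I) (n : ℕ) : Module.End KK M.carrier :=
  (qFact (A i i / 2) n)⁻¹ • (M.rho (Fg A θ i)) ^ n

open Finset

lemma intDegree_qZ (m : ℤ) : RatFunc.intDegree (qZ m) = m := by
  have hX : (RatFunc.X : KK) ≠ 0 := RatFunc.X_ne_zero
  have hpow (n : ℕ) : RatFunc.intDegree (RatFunc.X ^ n : KK) = n := by
    induction n with
    | zero => simp
    | succ n ih =>
      rw [pow_succ, RatFunc.intDegree_mul (pow_ne_zero _ hX) hX, ih, RatFunc.intDegree_X,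
        Nat.cast_succ]
  cases m with
  | ofNat n => simpa [qZ, qq] using hpow n
  | negSucc n => simp [qZ, qq, zpow_negSucc, RatFunc.intDegree_inv, hpow]; omega

lemma qZ_eq_one_iff {m : ℤ} : qZ m = 1 ↔ m = 0 :=
  ⟨fun h => by simpa [h] using (intDegree_qZ m).symm, by rintro rfl; rfl⟩

lemma qZ_pow (m : ℤ) (n : ℕ) : qZ m ^ n = qZ (m * n) := by
  rw [qZ, qZ, ← zpow_natCast, ← zpow_mul]

lemma qZ_ne_zero (m : ℤ) : qZ m ≠ 0 := zpow_ne_zero _ RatFunc.X_ne_zero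

lemma qZ_sub_qZ_ne_zero {m n : ℤ} (h : m ≠ n) : qZ m - qZ n ≠ 0 := by
  rw [sub_ne_zero, Ne, ← mul_inv_eq_one₀ (qZ_ne_zero n), qZ, qZ, ← zpow_neg,
    ← zpow_add₀ RatFunc.X_ne_zero]
  exact fun h' => h (by have := qZ_eq_one_iff.1 h'; omega)

lemma qFact_ne_zero {d : ℤ} (hd : 0 < d) (n : ℕ) : qFact d n ≠ 0 := by
  refine prod_ne_zero_iff.2 fun k _ => div_ne_zero (qZ_sub_qZ_ne_zero ?_) (qZ_sub_qZ_ne_zero ?_)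
  · have : 0 < d * ((k + 1 : ℕ) : ℤ) := by positivity
    omega
  · omega

lemma qZ_pow_ne_one {m : ℤ} (hm : m ≠ 0) {n : ℕ} (hn : 0 < n) : qZ m ^ n ≠ 1 := by
  rw [qZ_pow, Ne, qZ_eq_one_iff]
  exact mul_ne_zero hm (by exact_mod_cast hn.ne')

section DividedPowers

variable {K V : Type*} [Field K] [AddCommGroup V] [Module K V] {E F : Module.End K V} {s : K}

def geomFact (s : K) (n : ℕ) : K := ∏ j ∈ range n, ∑ k ∈ range (j + 1), s ^ k

lemma geomFact_ne_zero (hs : ∀ n, 0 < n → s ^ n ≠ 1) (n : ℕ) : geomFact s n ≠ 0 := by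
  refine prod_ne_zero_iff.2 fun j _ => ?_
  rw [geom_sum_eq (by simpa using hs 1 one_pos)]
  exact div_ne_zero (sub_ne_zero.2 (hs _ j.succ_pos)) (sub_ne_zero.2 (by simpa using hs 1 one_pos))

lemma geomFact_succ (n : ℕ) :
    geomFact s (n + 1) = (∑ k ∈ range (n + 1), s ^ k) * geomFact s n := by
  rw [geomFact, prod_range_succ, mul_comm, geomFact]

lemma apply_pow_succ_apply (hEF : E * F = s • (F * E) + 1) {v : V} (hv : E v = 0) (n : ℕ) :
    E ((F ^ (n + 1)) v) = (∑ k ∈ range (n + 1), s ^ k) • (F ^ n) v := by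
  induction n with
  | zero => simpa [hv] using congr($hEF v)
  | succ n ih =>
    have h : E ((F ^ (n + 2)) v) = s • F (E ((F ^ (n + 1)) v)) + (F ^ (n + 1)) v := by
      rw [pow_succ', Module.End.mul_apply, ← Module.End.mul_apply E, hEF]
      rfl
    rw [h, ih, map_smul, ← Module.End.mul_apply F, ← pow_succ', smul_smul,
      geom_sum_succ (n := n + 1), add_smul, one_smul]

lemma pow_apply_pow_apply (hEF : E * F = s • (F * E) + 1) {v : V} (hv : E v = 0) (n : ℕ) :
    (E ^ n) ((F ^ n) v) = geomFact s n • v := by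
  induction n with
  | zero => simp [geomFact]
  | succ n ih =>
    rw [pow_succ, Module.End.mul_apply, apply_pow_succ_apply hEF hv, map_smul, ih, smul_smul,
      geomFact_succ]

lemma pow_apply_pow_apply_of_lt (hEF : E * F = s • (F * E) + 1) {v : V} (hv : E v = 0)
    {m n : ℕ} (h : n < m) : (E ^ m) ((F ^ n) v) = 0 := by
  obtain ⟨k, rfl⟩ : ∃ k, m = k + 1 + n := ⟨m - n - 1, by omega⟩
  rw [pow_add, Module.End.mul_apply, pow_apply_pow_apply hEF hv, map_smul, pow_succ,
    Module.End.mul_apply, hv, map_zero, smul_zero]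

variable (a : ℕ → K)

lemma eq_zero_of_sum_apply_eq_zero (hEF : E * F = s • (F * E) + 1)
    (hs : ∀ n, 0 < n → s ^ n ≠ 1) (ha : ∀ n, a n ≠ 0) (c : ℕ →₀ V) (hc : ∀ n, E (c n) = 0)
    (h : (c.sum fun n x => (a n • F ^ n) x) = 0) : c = 0 := by
  by_contra hne
  set N := c.support.max' (Finsupp.support_nonempty_iff.2 hne)
  have hN : c N ≠ 0 := Finsupp.mem_support_iff.1 (max'_mem _ _)
  have key : (E ^ N) (c.sum fun n x => (a n • F ^ n) x) = (a N * geomFact s N) • c N := by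
    rw [Finsupp.sum, map_sum, sum_eq_single N]
    · rw [LinearMap.smul_apply, map_smul, pow_apply_pow_apply hEF (hc N), smul_smul]
    · intro n hn hnN
      rw [LinearMap.smul_apply, map_smul,
        pow_apply_pow_apply_of_lt hEF (hc n) (lt_of_le_of_ne (le_max' _ _ hn) hnN), smul_zero]
    · exact fun h => (h (max'_mem _ _)).elim
  rw [h, map_zero] at key
  exact hN ((smul_eq_zero.1 key.symm).resolve_left (mul_ne_zero (ha N) (geomFact_ne_zero hs N)))

lemma exists_sum_apply_eq (hEF : E * F = s • (F * E) + 1) (hs : ∀ n, 0 < n → s ^ n ≠ 1)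
    (ha : ∀ n, a n ≠ 0) (N : ℕ) (u : V) (hu : (E ^ N) u = 0) :
    ∃ c : ℕ →₀ V, (∀ n, E (c n) = 0) ∧ u = c.sum fun n x => (a n • F ^ n) x := by
  induction N generalizing u with
  | zero => exact ⟨0, fun _ => by simp, by simpa using hu⟩
  | succ N ih =>
    obtain ⟨w, hw_def⟩ : ∃ w, w = (a N * geomFact s N)⁻¹ • (E ^ N) u := ⟨_, rfl⟩
    have hw : E w = 0 := by
      rw [hw_def, map_smul, ← Module.End.mul_apply, ← pow_succ', hu, smul_zero]
    have hrest : (E ^ N) (u - (a N • F ^ N) w) = 0 := by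
      rw [map_sub, LinearMap.smul_apply, map_smul, pow_apply_pow_apply hEF hw, smul_smul, hw_def,
        smul_inv_smul₀ (mul_ne_zero (ha N) (geomFact_ne_zero hs N)), sub_self]
    obtain ⟨c, hc, hcu⟩ := ih _ hrest
    refine ⟨c + Finsupp.single N w, fun n => ?_, ?_⟩
    · rw [Finsupp.add_apply, map_add, hc, Finsupp.single_apply]
      split_ifs <;> simp [hw]
    · rw [Finsupp.sum_add_index' (fun _ => map_zero _) (fun _ => map_add _),
        Finsupp.sum_single_index (by simp), ← hcu, sub_add_cancel]

theorem existsUnique_sum_apply_eq (hEF : E * F = s • (F * E) + 1)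
    (hs : ∀ n, 0 < n → s ^ n ≠ 1) (ha : ∀ n, a n ≠ 0) {u : V} (hu : u ∈ E.maxGenEigenspace 0) :
    ∃! c : ℕ →₀ V, (∀ n, E (c n) = 0) ∧ u = c.sum fun n x => (a n • F ^ n) x := by
  obtain ⟨N, hN⟩ : ∃ N, (E ^ N) u = 0 := by simpa using hu
  obtain ⟨c, hc, hcu⟩ := exists_sum_apply_eq a hEF hs ha N u hN
  refine ⟨c, ⟨hc, hcu⟩, fun c' ⟨hc', hc'u⟩ => sub_eq_zero.1 ?_⟩
  refine eq_zero_of_sum_apply_eq_zero a hEF hs ha _ (fun n => by simp [hc, hc']) ?_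
  rw [Finsupp.sum_sub_index (fun _ => map_sub _), ← hcu, ← hc'u, sub_self]

end DividedPowers

section LocallyNilpotent

open Module.End

variable {K V : Type*} [Field K] [AddCommGroup V] [Module K V] {E G : Module.End K V}
  {N : ℕ} {v : V}

lemma pow_apply_eq_zero_of_mul_eq_smul {t : K} (h : E * G = t • (G * E)) (hv : (E ^ N) v = 0) :
    (E ^ N) (G v) = 0 := by
  induction N generalizing v with
  | zero => simp_all
  | succ N ih =>
    rw [pow_succ, mul_apply, ← mul_apply E, h, LinearMap.smul_apply, map_smul, mul_apply,
      ih (by rwa [← mul_apply, ← pow_succ]), smul_zero]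

lemma pow_succ_apply_eq_zero_of_mul_eq_smul_add {s : K} {D : Module.End K V}
    (h : E * G = s • (G * E) + D) (hD : ∀ N (v : V), (E ^ N) v = 0 → (E ^ N) (D v) = 0)
    (hv : (E ^ N) v = 0) : (E ^ (N + 1)) (G v) = 0 := by
  induction N generalizing v with
  | zero => simp_all
  | succ N ih =>
    rw [pow_succ, mul_apply, ← mul_apply E, h, LinearMap.add_apply, LinearMap.smul_apply,
      map_add, map_smul, mul_apply, ih (by rwa [← mul_apply, ← pow_succ]), hD _ _ hv, smul_zero,
      add_zero]

/-- Solving the relation for `E^b G` moves at least one factor `E` to the right of `G`. -/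
lemma pow_mul_apply_eq_zero_of_sum_eq_zero {b : ℕ} {μ : ℕ → K} (hμ : μ b ≠ 0)
    (hs : ∑ k ∈ range (b + 1), μ k • (E ^ k * G * E ^ (b - k)) = 0) (hv : (E ^ N) v = 0) :
    (E ^ (b * N)) (G v) = 0 := by
  induction N generalizing v with
  | zero => simp_all
  | succ N ih =>
    have hterm : ∀ k ∈ range b, (E ^ (b * N)) ((μ k • (E ^ k * G * E ^ (b - k))) v) = 0 := by
      intro k hk
      have hk' : (E ^ N) ((E ^ (b - k)) v) = 0 := by
        obtain ⟨m, hm⟩ : ∃ m, N + (b - k) = m + (N + 1) := ⟨b - k - 1, by grind⟩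
        rw [← mul_apply, ← pow_add, hm, pow_add, mul_apply, hv, map_zero]
      rw [LinearMap.smul_apply, map_smul, mul_apply, mul_apply, ← mul_apply (E ^ (b * N)),
        ← pow_add, add_comm, pow_add, mul_apply, ih hk', map_zero, smul_zero]
    have htop := congr((E ^ (b * N)) ($hs v))
    rw [sum_range_succ, LinearMap.add_apply, map_add, LinearMap.sum_apply, map_sum,
      sum_eq_zero hterm, zero_add, Nat.sub_self, pow_zero, mul_one, LinearMap.smul_apply,
      map_smul, mul_apply, ← mul_apply (E ^ (b * N)), ← pow_add, LinearMap.zero_apply,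
      map_zero, smul_eq_zero] at htop
    rw [Nat.mul_succ]
    exact htop.resolve_left hμ

end LocallyNilpotent

theorem apply_mem_of_forall_ι_apply_mem {R X V : Type*} [CommRing R] [AddCommGroup V]
    [Module R V] {r : FreeAlgebra R X → FreeAlgebra R X → Prop}
    (ρ : RingQuot r →ₐ[R] Module.End R V) (W : Submodule R V)
    (hW : ∀ x, ∀ w ∈ W, ρ (RingQuot.mkAlgHom R r (FreeAlgebra.ι R x)) w ∈ W)
    (y : RingQuot r) {w : V} (hw : w ∈ W) : ρ y w ∈ W := by
  obtain ⟨y, rfl⟩ := RingQuot.mkAlgHom_surjective R r y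
  induction y generalizing w with
  | grade0 c => simpa [AlgHom.commutes] using W.smul_mem c hw
  | grade1 x => exact hW x w hw
  | mul a b ha hb =>
    rw [map_mul, map_mul, Module.End.mul_apply]
    exact ha (hb hw)
  | add a b ha hb =>
    rw [map_add, map_add, LinearMap.add_apply]
    exact W.add_mem (ha hw) (hb hw)

lemma IsCartan.div_two_pos {I : Type} {A : I → I → ℤ} (hA : IsCartan A) (i : I) :
    0 < A i i / 2 := by
  have := hA.2.1 i
  have := hA.2.2.1 i
  omega

namespace BRep

open Module.End

variable (M : BRep A θ)

lemma rho_mkAlgHom_of_rel {x y : FreeAlgebra KK (BGen I)} (h : BRel A θ x y) :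
    M.rho (RingQuot.mkAlgHom KK (BRel A θ) x) = M.rho (RingQuot.mkAlgHom KK (BRel A θ) y) :=
  congrArg M.rho (RingQuot.mkAlgHom_rel KK h)

lemma rho_E_mul_rho_F (i j : I) :
    M.rho (Eg A θ i) * M.rho (Fg A θ j) =
      qZ (-(A i j)) • (M.rho (Fg A θ j) * M.rho (Eg A θ i)) +
      ((if i = j then 1 else 0) + (if θ i = j then M.rho (Tg A θ i) else 0)) := by
  have h := M.rho_mkAlgHom_of_rel (BRel.EF i j)
  split_ifs at h ⊢ <;> simpa [Eg, Fg, Tg, add_assoc] using h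

lemma rho_T_mul_rho_E (i j : I) :
    M.rho (Tg A θ i) * M.rho (Eg A θ j) =
      qZ (A i j + A (θ i) j) • (M.rho (Eg A θ j) * M.rho (Tg A θ i)) := by
  simpa [Eg, Tg] using M.rho_mkAlgHom_of_rel (BRel.TE i j)

lemma rho_T_mul_rho_Ti (i : I) : M.rho (Tg A θ i) * M.rho (Tig A θ i) = 1 := by
  simpa [Tg, Tig] using M.rho_mkAlgHom_of_rel (BRel.T_inv_right i)

lemma rho_Ti_mul_rho_T (i : I) : M.rho (Tig A θ i) * M.rho (Tg A θ i) = 1 := by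
  simpa [Tg, Tig] using M.rho_mkAlgHom_of_rel (BRel.T_inv_left i)

lemma serreElt_rho_E {i j : I} (hij : i ≠ j) :
    serreElt A (fun k => M.rho (Eg A θ k)) i j = 0 := by
  simpa [serreElt, Eg] using M.rho_mkAlgHom_of_rel (BRel.Eserre i j hij)

lemma rho_E_mul_rho_T (i j : I) :
    M.rho (Eg A θ j) * M.rho (Tg A θ i) =
      (qZ (A i j + A (θ i) j))⁻¹ • (M.rho (Tg A θ i) * M.rho (Eg A θ j)) :=
  (eq_inv_smul_iff₀ (qZ_ne_zero _)).2 (M.rho_T_mul_rho_E i j).symm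

lemma rho_E_mul_rho_Ti (i j : I) :
    M.rho (Eg A θ j) * M.rho (Tig A θ i) =
      qZ (A i j + A (θ i) j) • (M.rho (Tig A θ i) * M.rho (Eg A θ j)) := by
  calc M.rho (Eg A θ j) * M.rho (Tig A θ i)
      = M.rho (Tig A θ i) * (M.rho (Tg A θ i) * M.rho (Eg A θ j)) * M.rho (Tig A θ i) := by
        rw [← mul_assoc, rho_Ti_mul_rho_T, one_mul]
    _ = qZ (A i j + A (θ i) j) • (M.rho (Tig A θ i) * M.rho (Eg A θ j)) := by
        rw [rho_T_mul_rho_E, mul_smul_comm, smul_mul_assoc, mul_assoc, mul_assoc,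
          rho_T_mul_rho_Ti, mul_one]

variable {M}

lemma exists_pow_apply_rho_ι_eq_zero (hA : IsCartan A) (i : I) (g : BGen I) {N : ℕ}
    {w : M.carrier} (hw : (M.rho (Eg A θ i) ^ N) w = 0) :
    ∃ N', (M.rho (Eg A θ i) ^ N')
      (M.rho (RingQuot.mkAlgHom KK (BRel A θ) (FreeAlgebra.ι KK g)) w) = 0 := by
  cases g with
  | E j =>
    change ∃ N', (M.rho (Eg A θ i) ^ N') (M.rho (Eg A θ j) w) = 0
    by_cases hij : i = j
    · subst hij
      exact ⟨N, by rw [← mul_apply, ← pow_succ, pow_succ', mul_apply, hw, map_zero]⟩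
    · refine ⟨serreN A i j * N,
        pow_mul_apply_eq_zero_of_sum_eq_zero ?_ (M.serreElt_rho_E hij) hw⟩
      simpa [qFact] using qFact_ne_zero (hA.div_two_pos i) (serreN A i j)
  | F j =>
    refine ⟨N + 1, pow_succ_apply_eq_zero_of_mul_eq_smul_add (M.rho_E_mul_rho_F i j)
      (fun N v hv => ?_) hw⟩
    rw [LinearMap.add_apply, map_add]
    split_ifs <;> simp [hv, pow_apply_eq_zero_of_mul_eq_smul (M.rho_E_mul_rho_T i i) hv]
  | T j => exact ⟨N, pow_apply_eq_zero_of_mul_eq_smul (M.rho_E_mul_rho_T j i) hw⟩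
  | Ti j => exact ⟨N, pow_apply_eq_zero_of_mul_eq_smul (M.rho_E_mul_rho_Ti j i) hw⟩

theorem maxGenEigenspace_rho_E_eq_top (hA : IsCartan A) {lam : I → ℤ}
    (hM : IsVtheta A θ lam M) (i : I) : (M.rho (Eg A θ i)).maxGenEigenspace 0 = ⊤ := by
  refine hM.2.2.1 _
    (fun x w hw => apply_mem_of_forall_ι_apply_mem M.rho _ (fun g w hw => ?_) x hw) ?_
  · simp only [mem_maxGenEigenspace, zero_smul, sub_zero] at hw ⊢
    obtain ⟨N, hN⟩ := hw
    exact exists_pow_apply_rho_ι_eq_zero hA i g hN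
  · simp only [mem_maxGenEigenspace, zero_smul, sub_zero]
    exact ⟨1, by simpa using hM.1 i⟩

end BRep

theorem stmt11_general (A : I → I → ℤ) (θ : I → I) (hA : IsCartan A)
    (hfree : ∀ i : I, θ i ≠ i)
    (lam : I → ℤ)
    (M : BRep A θ) (hM : IsVtheta A θ lam M) :
    ∀ (i : I) (u : M.carrier),
      ∃! c : ℕ →₀ M.carrier,
        (∀ n : ℕ, M.rho (Eg A θ i) (c n) = 0) ∧
        u = c.sum fun n x => Fpow lam M i n x := by
  intro i u
  have hEF : M.rho (Eg A θ i) * M.rho (Fg A θ i) =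
      qZ (-(A i i)) • (M.rho (Fg A θ i) * M.rho (Eg A θ i)) + 1 := by
    simpa [hfree i] using M.rho_E_mul_rho_F i i
  have hs (n : ℕ) (hn : 0 < n) : qZ (-(A i i)) ^ n ≠ 1 :=
    qZ_pow_ne_one (neg_ne_zero.2 (hA.2.1 i).ne') hn
  exact existsUnique_sum_apply_eq (fun n => (qFact (A i i / 2) n)⁻¹) hEF hs
    (fun n => inv_ne_zero (qFact_ne_zero (hA.div_two_pos i) n))
    (M.maxGenEigenspace_rho_E_eq_top hA hM i ▸ Submodule.mem_top)

theorem stmt11 (A : I → I → ℤ) (θ : I → I) (hA : IsCartan A) (hθ : IsTheta A θ)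
    (hfree : ∀ i : I, θ i ≠ i)
    (lam : I → ℤ) (hlam : IsDomWt A θ lam)
    (M : BRep A θ) (hM : IsVtheta A θ lam M) :
    ∀ (i : I) (u : M.carrier),
      ∃! c : ℕ →₀ M.carrier,
        (∀ n : ℕ, M.rho (Eg A θ i) (c n) = 0) ∧
        u = c.sum fun n x => Fpow lam M i n x :=
  stmt11_general A θ hA hfree lam M hM
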